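/- arXiv:2112.02847 — 3 statements merged into one kernel-verified Lean document; each statement's English description precedes it below -/
import Mathlib

section
/- Let X be a smooth projective surface and A, B, C nef divisors with 2·(B·A)·(A·C) = (A²)·(B·C) ≠ 0. Then B² = C² = 0, (B·C) ≠ 0, and A is numerically equivalent to sB + tC for some real s, t > 0; in fact A ≡ (A²)/(2(B·A))·B + (A²)/(2(C·A))·C. -/
/-- **Characterization of equality in the surface reverse Khovanskii–Teissier
inequality.**  The smooth projective surface is modelled by its real
Néron–Severi space `M` with the symmetric bilinear intersection form `ι`,
the nef cone `Nef` (on which `ι` is nonnegative), and an ample class `H`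
satisfying the Hodge index theorem (`hodge`) and positivity against nonzero
nef classes (`hamplePos`).  If `A, B, C` are nef with
`2 (B·A)(A·C) = (A²)(B·C) ≠ 0`, then `B² = C² = 0`, `(B·C) ≠ 0`, and
`A ≡ (A²)/(2(B·A))·B + (A²)/(2(C·A))·C` with both coefficients positive
(in particular `A ≡ sB + tC` with `s, t > 0`). -/
theorem stmt1
    {M : Type*} [AddCommGroup M] [Module ℝ M]
    (ι : M →ₗ[ℝ] M →ₗ[ℝ] ℝ)
    (hsymm : ∀ x y : M, ι x y = ι y x)
    (Nef Ample : Set M)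
    (hnef : ∀ x y : M, x ∈ Nef → y ∈ Nef → 0 ≤ ι x y)
    (H : M) (hH : H ∈ Ample)
    (hodge : ∀ Γ : M, ι Γ H = 0 → 0 ≤ ι Γ Γ → Γ = 0)
    (hamplePos : ∀ D : M, D ∈ Nef → D ≠ 0 → 0 < ι H D)
    (A B C : M) (hA : A ∈ Nef) (hB : B ∈ Nef) (hC : C ∈ Nef)
    (heq : 2 * ι B A * ι A C = ι A A * ι B C)
    (hne : ι A A * ι B C ≠ 0) :
    ι B B = 0 ∧ ι C C = 0 ∧ ι B C ≠ 0 ∧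
      0 < ι A A / (2 * ι B A) ∧ 0 < ι A A / (2 * ι C A) ∧
      A = (ι A A / (2 * ι B A)) • B + (ι A A / (2 * ι C A)) • C := by
  have hAA0 : ι A A ≠ 0 := fun h => hne (by rw [h]; ring)
  have hBC0 : ι B C ≠ 0 := fun h => hne (by rw [h]; ring)
  have hAA : 0 < ι A A := lt_of_le_of_ne (hnef A A hA hA) (Ne.symm hAA0)
  have hBC : 0 < ι B C := lt_of_le_of_ne (hnef B C hB hC) (Ne.symm hBC0)
  have hBA : 0 < ι B A := by
    rcases lt_or_eq_of_le (hnef B A hB hA) with h | h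
    · exact h
    · exfalso; rw [← h] at heq; exact hne (by linarith)
  have hAC : 0 < ι A C := by
    rcases lt_or_eq_of_le (hnef A C hA hC) with h | h
    · exact h
    · exfalso; rw [← h] at heq; exact hne (by linarith)
  have hCA : ι C A = ι A C := hsymm C A
  -- generalized Hodge index: can replace H by any class with positive square
  have geh : ∀ D Γ : M, 0 < ι D D → ι Γ D = 0 → 0 ≤ ι Γ Γ → Γ = 0 := by
    intro D Γ hD hGD hGG
    have hDH : ι D H ≠ 0 := by
      intro h
      have h0 := hodge D h (le_of_lt hD)
      rw [h0] at hD; simp at hD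
    set a := ι Γ H with ha
    set b := ι D H with hb
    have hv : (b • Γ - a • D) = 0 := by
      apply hodge
      · simp only [map_sub, map_smul, LinearMap.sub_apply, LinearMap.smul_apply,
          smul_eq_mul, ← ha, ← hb]
        ring
      · have e : ι (b • Γ - a • D) (b • Γ - a • D)
            = b ^ 2 * ι Γ Γ + a ^ 2 * ι D D - 2 * a * b * ι Γ D := by
          simp only [map_sub, map_smul, LinearMap.sub_apply, LinearMap.smul_apply,
            smul_eq_mul, hsymm D Γ]
          ring
        rw [e, hGD]
        nlinarith
    have hΓ : b • Γ = a • D := by rwa [sub_eq_zero] at hv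
    have h2 : b * ι Γ D = a * ι D D := by
      have := congrArg (fun x => ι x D) hΓ
      simpa [map_smul, smul_eq_mul] using this
    rw [hGD, mul_zero] at h2
    have ha0 : a = 0 := by
      rcases mul_eq_zero.mp h2.symm with h | h
      · exact h
      · exact absurd h (ne_of_gt hD)
    rw [ha0, zero_smul] at hΓ
    rcases smul_eq_zero.mp hΓ with h | h
    · exact absurd h hDH
    · exact h
  set s := ι A A / (2 * ι B A) with hs
  set t := ι A A / (2 * ι C A) with ht
  have hCA0 : ι C A ≠ 0 := by rw [hCA]; exact ne_of_gt hAC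
  have hspos : 0 < s := div_pos hAA (by linarith)
  have htpos : 0 < t := by rw [ht, hCA]; exact div_pos hAA (by linarith)
  have hsBA : s * ι B A = ι A A / 2 := by
    rw [hs]; field_simp
  have htCA : t * ι C A = ι A A / 2 := by
    rw [ht]; field_simp
  have htBC : t * ι B C = ι B A := by
    rw [ht, hCA, div_mul_eq_mul_div, div_eq_iff (by positivity : (2 : ℝ) * ι A C ≠ 0)]
    linear_combination -heq
  have hsBC : s * ι B C = ι A C := by
    rw [hs, div_mul_eq_mul_div, div_eq_iff (by positivity : (2 : ℝ) * ι B A ≠ 0)]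
    linear_combination -heq
  have expand1 : ∀ X : M, ι (A - s • B - t • C) X = ι A X - s * ι B X - t * ι C X := by
    intro X
    simp [map_sub, map_smul, LinearMap.sub_apply, LinearMap.smul_apply, smul_eq_mul]
  have expand2 : ∀ X : M, ι X (A - s • B - t • C) = ι X A - s * ι X B - t * ι X C := by
    intro X
    simp [map_sub, map_smul, smul_eq_mul]
  have hGA : ι (A - s • B - t • C) A = 0 := by
    rw [expand1]; linarith
  have hGB : ι (A - s • B - t • C) B = -(s * ι B B) := by
    rw [expand1, hsymm A B, hsymm C B]; linarith
  have hGC : ι (A - s • B - t • C) C = -(t * ι C C) := by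
    rw [expand1]; linarith
  have hGG : ι (A - s • B - t • C) (A - s • B - t • C)
      = s ^ 2 * ι B B + t ^ 2 * ι C C := by
    rw [expand2, hGA, hGB, hGC]; ring
  have hBB : 0 ≤ ι B B := hnef B B hB hB
  have hCC : 0 ≤ ι C C := hnef C C hC hC
  have hGGpos : 0 ≤ ι (A - s • B - t • C) (A - s • B - t • C) := by
    rw [hGG]; positivity
  have hΓ0 : A - s • B - t • C = 0 := geh A _ hAA hGA hGGpos
  rw [hΓ0] at hGG
  simp only [map_zero, LinearMap.zero_apply] at hGG
  have h1 : 0 ≤ s ^ 2 * ι B B := by positivity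
  have h2 : 0 ≤ t ^ 2 * ι C C := by positivity
  have h3 : s ^ 2 * ι B B = 0 := by linarith
  have h4 : t ^ 2 * ι C C = 0 := by linarith
  have hBB0 : ι B B = 0 :=
    (mul_eq_zero.mp h3).resolve_left (by positivity)
  have hCC0 : ι C C = 0 :=
    (mul_eq_zero.mp h4).resolve_left (by positivity)
  rw [sub_sub, sub_eq_zero] at hΓ0
  exact ⟨hBB0, hCC0, hBC0, hspos, htpos, hΓ0⟩
end

section
/- Let n ≥ 2 and 1 ≤ k ≤ n−1. On X = ℙ^k × ℙ^{n−k}, let A = p₁*H₁ + p₂*H₂, B = p₁*H₁, C = p₂*H₂, where H₁, H₂ are hyperplane classes on the factors and p₁, p₂ the projections. Then (B^k·A^{n−k})·(A^k·C^{n−k}) = (k!(n−k)!/n!)·(A^n)·(B^k·C^{n−k}), i.e. the constant k!(n−k)!/n! in the reverse Khovanskii–Teissier inequality is attained. -/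
/-- **The constant `k!(n−k)!/n!` is attained on `ℙ^k × ℙ^{n−k}`.**
The Néron–Severi space of `X = ℙ^k × ℙ^{n−k}` is modelled by `M` with the
symmetric `n`-multilinear intersection form `ι`; `B = p₁*H₁` and `C = p₂*H₂`
are the pullbacks of the hyperplane classes, whose intersection numbers are
given by the Künneth formula (`hkunneth`): `(B^a·C^b) = 1` if `a = k`
(and `b = n − k`), and `0` otherwise.  With `A = B + C`, equality holds in
the reverse Khovanskii–Teissier inequality:
`(B^k·A^{n−k})·(A^k·C^{n−k}) = (k!(n−k)!/n!)·(A^n)·(B^k·C^{n−k})`. -/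
theorem stmt3
    (n k : ℕ) (hn : 2 ≤ n) (hk1 : 1 ≤ k) (hk2 : k ≤ n - 1)
    {M : Type*} [AddCommGroup M] [Module ℝ M]
    (ι : MultilinearMap ℝ (fun _ : Fin n => M) ℝ)
    (hsymm : ∀ (v : Fin n → M) (σ : Equiv.Perm (Fin n)), ι (v ∘ σ) = ι v)
    (B C : M) (hBC : B ≠ C)
    (hkunneth : ∀ v : Fin n → M, (∀ j, v j = B ∨ v j = C) →
      ι v = if Nat.card {j : Fin n // v j = B} = k then 1 else 0) :
    ι (fun j => if (j : ℕ) < k then B else B + C) *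
        ι (fun j => if (j : ℕ) < k then B + C else C) =
      ((k.factorial : ℝ) * (n - k).factorial / n.factorial) *
        (ι (fun _ => B + C) * ι (fun j => if (j : ℕ) < k then B else C)) := by
  classical
  have hkn : k < n := by omega
  set Fk : Finset (Fin n) := Finset.univ.filter (fun j : Fin n => (j : ℕ) < k) with hFk
  have hFkmem : ∀ j : Fin n, j ∈ Fk ↔ (j : ℕ) < k := by
    intro j; simp [hFk]
  have hFkcard : Fk.card = k := by
    have : Fk = Finset.Iio (⟨k, hkn⟩ : Fin n) := by
      ext j; simp [hFk, Fin.lt_def]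
    rw [this, Fin.card_Iio]
  -- key computation: ι of (B on s, C off s)
  have key : ∀ s : Finset (Fin n),
      ι (fun j => if j ∈ s then B else C) = if s.card = k then 1 else 0 := by
    intro s
    rw [hkunneth _ (fun j => by by_cases h : j ∈ s <;> simp [h])]
    have hfil : Finset.univ.filter (fun j : Fin n => (if j ∈ s then B else C) = B) = s := by
      ext j; by_cases h : j ∈ s <;> simp [h, Ne.symm hBC]
    rw [Nat.card_eq_fintype_card, Fintype.card_subtype, hfil]
  -- first factor
  have T1 : ι (fun j => if (j : ℕ) < k then B else B + C) = 1 := by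
    have hv : (fun j : Fin n => if (j : ℕ) < k then B else B + C)
        = (fun _ : Fin n => B) + (fun j : Fin n => if (j : ℕ) < k then 0 else C) := by
      funext j; by_cases h : (j : ℕ) < k <;> simp [h]
    rw [hv, MultilinearMap.map_add_univ]
    have hterm : ∀ s : Finset (Fin n),
        ι (s.piecewise (fun _ => B) (fun j => if (j : ℕ) < k then 0 else C))
          = if s = Fk then 1 else 0 := by
      intro s
      by_cases hs : Fk ⊆ s
      · have hrw : s.piecewise (fun _ => B) (fun j => if (j : ℕ) < k then 0 else C)
            = fun j => if j ∈ s then B else C := by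
          funext j
          by_cases hj : j ∈ s
          · simp [Finset.piecewise, hj]
          · have hjk : ¬ ((j : ℕ) < k) := fun h => hj (hs ((hFkmem j).mpr h))
            simp [Finset.piecewise, hj, hjk]
        rw [hrw, key]
        have hiff : s.card = k ↔ s = Fk := by
          constructor
          · intro h
            exact (Finset.eq_of_subset_of_card_le hs (by omega)).symm
          · intro h; rw [h, hFkcard]
        simp [hiff]
      · obtain ⟨j, hjF, hjs⟩ := Finset.not_subset.mp hs
        have hjk : (j : ℕ) < k := (hFkmem j).mp hjF
        have hne : s ≠ Fk := fun h => hjs (h ▸ hjF)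
        rw [if_neg hne]
        exact MultilinearMap.map_coord_zero ι j (by simp [Finset.piecewise, hjs, hjk])
    rw [Finset.sum_congr rfl (fun s _ => hterm s), Finset.sum_ite_eq' Finset.univ Fk fun _ => (1:ℝ)]
    simp
  -- second factor
  have T2 : ι (fun j => if (j : ℕ) < k then B + C else C) = 1 := by
    have hv : (fun j : Fin n => if (j : ℕ) < k then B + C else C)
        = (fun j : Fin n => if (j : ℕ) < k then B else 0) + (fun _ : Fin n => C) := by
      funext j; by_cases h : (j : ℕ) < k <;> simp [h]
    rw [hv, MultilinearMap.map_add_univ]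
    have hterm : ∀ s : Finset (Fin n),
        ι (s.piecewise (fun j => if (j : ℕ) < k then B else 0) (fun _ => C))
          = if s = Fk then 1 else 0 := by
      intro s
      by_cases hs : s ⊆ Fk
      · have hrw : s.piecewise (fun j => if (j : ℕ) < k then B else 0) (fun _ => C)
            = fun j => if j ∈ s then B else C := by
          funext j
          by_cases hj : j ∈ s
          · have hjk : (j : ℕ) < k := (hFkmem j).mp (hs hj)
            simp [Finset.piecewise, hj, hjk]
          · simp [Finset.piecewise, hj]
        rw [hrw, key]
        have hiff : s.card = k ↔ s = Fk := by
          constructor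
          · intro h
            exact Finset.eq_of_subset_of_card_le hs (by omega)
          · intro h; rw [h, hFkcard]
        simp [hiff]
      · obtain ⟨j, hjs, hjF⟩ := Finset.not_subset.mp hs
        have hjk : ¬ ((j : ℕ) < k) := fun h => hjF ((hFkmem j).mpr h)
        have hne : s ≠ Fk := fun h => hjF (h ▸ hjs)
        rw [if_neg hne]
        exact MultilinearMap.map_coord_zero ι j (by simp [Finset.piecewise, hjs, hjk])
    rw [Finset.sum_congr rfl (fun s _ => hterm s), Finset.sum_ite_eq' Finset.univ Fk fun _ => (1:ℝ)]
    simp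
  -- (A^n) = choose n k
  have T3 : ι (fun _ => B + C) = (n.choose k : ℝ) := by
    have hv : (fun _ : Fin n => B + C) = (fun _ : Fin n => B) + (fun _ : Fin n => C) := rfl
    rw [hv, MultilinearMap.map_add_univ]
    have hterm : ∀ s : Finset (Fin n),
        ι (s.piecewise (fun _ => B) (fun _ => C)) = if s.card = k then 1 else 0 := by
      intro s
      have hrw : s.piecewise (fun _ => B) (fun _ => C) = fun j => if j ∈ s then B else C := by
        funext j; by_cases hj : j ∈ s <;> simp [Finset.piecewise, hj]
      rw [hrw, key]
    rw [Finset.sum_congr rfl (fun s _ => hterm s), Finset.sum_boole]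
    have hfil : Finset.univ.filter (fun s : Finset (Fin n) => s.card = k)
        = Finset.powersetCard k (Finset.univ : Finset (Fin n)) := by
      rw [Finset.powersetCard_eq_filter, Finset.powerset_univ]
    rw [hfil, Finset.card_powersetCard, Finset.card_univ, Fintype.card_fin]
  -- (B^k · C^{n-k}) = 1
  have T4 : ι (fun j => if (j : ℕ) < k then B else C) = 1 := by
    have hv : (fun j : Fin n => if (j : ℕ) < k then B else C)
        = fun j => if j ∈ Fk then B else C := by
      funext j; by_cases h : (j : ℕ) < k <;> simp [hFkmem j, h, hFk]
    rw [hv, key, hFkcard, if_pos rfl]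
  rw [T1, T2, T3, T4]
  have hcf : (n.choose k : ℝ) * k.factorial * (n - k).factorial = n.factorial := by
    exact_mod_cast Nat.choose_mul_factorial_mul_factorial hkn.le
  have hfac : (n.factorial : ℝ) ≠ 0 := by positivity
  field_simp
  linarith [hcf]
end

section
/- Assume the reverse Khovanskii–Teissier inequality holds on all projective varieties: for nef divisors A, B₁,…,B_k, C₁,…,C_{n−k} on an n-fold, (B₁⋯B_k·A^{n−k})·(A^k·C₁⋯C_{n−k}) ≥ (k!(n−k)!/n!)(A^n)(B₁⋯B_k·C₁⋯C_{n−k}). Then for ample A, B₁,…,B_k, C₁,…,C_{n−k} the inequality is strict. Equivalently: if equality holds with all divisors ample, then (A^n)·(B₁⋯B_{k−1}·A·C₁⋯C_{n−k}) ≤ 0, contradicting positivity of intersections of ample divisors. -/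
/-!
Suppose equality holds for ample `A, B₁, …, B_k, C₁, …, C_{n−k}`. Since `B_k − tA` is still
ample for small `t > 0`, the inequality holds for it too; both sides are affine in `t` and agree
at `t = 0`, so comparing the `t`-coefficients gives
`(B₁⋯B_{k−1}·A^{n−k+1})(A^k·C) ≤ (k!(n−k)!/n!)(A^n)(B₁⋯B_{k−1}·A·C)`.
The restricted inequality on a divisor in `|A|` bounds the same left side from below with the
coefficient `(k−1)!(n−k)!/(n−1)!`, which is larger by the factor `n/k > 1`. That would force the
positive number `(A^n)(B₁⋯B_{k−1}·A·C)` to be `≤ 0`.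
-/

theorem factorial_ratio_lt_factorial_ratio_pred {n k : ℕ} (hk : 0 < k) (hkn : k < n) :
    (k.factorial : ℝ) * (n - k).factorial / n.factorial <
      ((k - 1).factorial : ℝ) * (n - k).factorial / (n - 1).factorial := by
  have hk' : (k : ℝ) * (k - 1).factorial = k.factorial := by
    exact_mod_cast Nat.mul_factorial_pred hk.ne'
  have hn' : (n : ℝ) * (n - 1).factorial = n.factorial := by
    exact_mod_cast Nat.mul_factorial_pred (hk.trans hkn).ne'
  have hkn' : (k : ℝ) < n := by exact_mod_cast hkn
  have hn0 : (0 : ℝ) < n := by exact_mod_cast hk.trans hkn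
  rw [← hk', ← hn', div_lt_div_iff₀ (by positivity) (by positivity)]
  have : (0 : ℝ) < (k - 1).factorial * (n - k).factorial * (n - 1).factorial := by positivity
  nlinarith

theorem mul_le_of_eq_of_perturbed_le {P Q R S P' T c t : ℝ} (ht : 0 < t)
    (heq : P * Q = c * (R * S)) (hperturbed : (P - t * P') * Q ≥ c * (R * (S - t * T))) :
    P' * Q ≤ c * (R * T) :=
  le_of_mul_le_mul_left (by linarith) ht

theorem update_ite_lt {M : Type*} {n k : ℕ} (B : ℕ → M) (X : Fin n → M) {i : Fin n}
    (hi : (i : ℕ) < k) (D : M) :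
    Function.update (fun j : Fin n => if (j : ℕ) < k then B j else X j) i D =
      fun j : Fin n => if (j : ℕ) < k then Function.update B i D j else X j := by
  funext j
  rcases eq_or_ne j i with rfl | hj
  · simp [hi]
  · have : (j : ℕ) ≠ i := Fin.val_ne_of_ne hj
    simp [Function.update_of_ne hj, Function.update_of_ne this]

theorem ite_update_pred_eq {M : Type*} {n k : ℕ} (hk : 0 < k) (B : ℕ → M) (X : Fin n → M)
    (D : M) :
    (fun j : Fin n => if (j : ℕ) < k then Function.update B (k - 1) D j else X j) =
      fun j : Fin n => if (j : ℕ) < k - 1 then B j else if (j : ℕ) < k then D else X j := by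
  funext j
  by_cases h : (j : ℕ) = k - 1
  · simp [h, hk]
  · by_cases hj : (j : ℕ) < k - 1
    · simp [Function.update_of_ne h, hj, show (j : ℕ) < k by omega]
    · simp [hj, show ¬ (j : ℕ) < k by omega]

theorem map_ite_update_sub_smul {M : Type*} [AddCommGroup M] [Module ℝ M] {n k : ℕ}
    (hk : 0 < k) (hkn : k ≤ n) (ι : MultilinearMap ℝ (fun _ : Fin n => M) ℝ)
    (B : ℕ → M) (X : Fin n → M) (A : M) (t : ℝ) :
    ι (fun j => if (j : ℕ) < k then Function.update B (k - 1) (B (k - 1) - t • A) j else X j) =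
      ι (fun j => if (j : ℕ) < k then B j else X j) -
        t * ι (fun j => if (j : ℕ) < k - 1 then B j else if (j : ℕ) < k then A else X j) := by
  have hi : ((⟨k - 1, by omega⟩ : Fin n) : ℕ) < k := Nat.sub_one_lt_of_lt hk
  rw [← ite_update_pred_eq hk, ← update_ite_lt B X hi, ← update_ite_lt B X hi,
    MultilinearMap.map_update_sub, MultilinearMap.map_update_smul, smul_eq_mul,
    Function.update_eq_self_iff.2 (by simp [hi])]

theorem stmt8_general
    (n k : ℕ) (hk1 : 1 ≤ k) (hk2 : k ≤ n - 1)
    {M : Type*} [AddCommGroup M] [Module ℝ M]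
    (ι : MultilinearMap ℝ (fun _ : Fin n => M) ℝ)
    (Nef Ample : Set M)
    (hAmpleNef : Ample ⊆ Nef)
    (hAmplePos : ∀ v : Fin n → M, (∀ j, v j ∈ Ample) → 0 < ι v)
    (hAmpleOpen : ∀ D E : M, D ∈ Ample → E ∈ Ample →
      ∃ t : ℝ, 0 < t ∧ D - t • E ∈ Ample)
    (hRKT : ∀ (A : M) (B C : ℕ → M), A ∈ Nef →
      (∀ i < k, B i ∈ Nef) → (∀ i < n - k, C i ∈ Nef) →
      ι (fun j => if (j : ℕ) < k then B (j : ℕ) else A) *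
          ι (fun j => if (j : ℕ) < k then A else C ((j : ℕ) - k)) ≥
        ((k.factorial : ℝ) * (n - k).factorial / n.factorial) *
          (ι (fun _ => A) *
            ι (fun j => if (j : ℕ) < k then B (j : ℕ) else C ((j : ℕ) - k))))
    (hRKTsub : ∀ (A : M) (B C : ℕ → M), A ∈ Nef →
      (∀ i < k, B i ∈ Nef) → (∀ i < n - k, C i ∈ Nef) →
      ι (fun j => if (j : ℕ) < k - 1 then B (j : ℕ) else A) *
          ι (fun j => if (j : ℕ) < k then A else C ((j : ℕ) - k)) ≥
        (((k - 1).factorial : ℝ) * (n - k).factorial / (n - 1).factorial) *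
          (ι (fun _ => A) *
            ι (fun j => if (j : ℕ) < k - 1 then B (j : ℕ)
                else if (j : ℕ) < k then A else C ((j : ℕ) - k))))
    (A : M) (B C : ℕ → M)
    (hA : A ∈ Ample) (hB : ∀ i < k, B i ∈ Ample) (hC : ∀ i < n - k, C i ∈ Ample) :
    ι (fun j => if (j : ℕ) < k then B (j : ℕ) else A) *
        ι (fun j => if (j : ℕ) < k then A else C ((j : ℕ) - k)) >
      ((k.factorial : ℝ) * (n - k).factorial / n.factorial) *
        (ι (fun _ => A) *
          ι (fun j => if (j : ℕ) < k then B (j : ℕ) else C ((j : ℕ) - k))) := by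
  have hkn : k < n := by omega
  have hBnef : ∀ i < k, B i ∈ Nef := fun i hi => hAmpleNef (hB i hi)
  have hCnef : ∀ i < n - k, C i ∈ Nef := fun i hi => hAmpleNef (hC i hi)
  by_contra! hle
  have heq := le_antisymm hle (hRKT A B C (hAmpleNef hA) hBnef hCnef)
  obtain ⟨t, ht, htA⟩ := hAmpleOpen (B (k - 1)) A (hB (k - 1) (by omega)) hA
  have hperturbed := hRKT A (Function.update B (k - 1) (B (k - 1) - t • A)) C (hAmpleNef hA)
    (Function.forall_update_iff B (p := fun i b => i < k → b ∈ Nef) |>.2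
      ⟨fun _ => hAmpleNef htA, fun i _ => hBnef i⟩) hCnef
  rw [map_ite_update_sub_smul hk1 hkn.le, map_ite_update_sub_smul hk1 hkn.le] at hperturbed
  simp only [ite_self] at hperturbed
  have hderiv := mul_le_of_eq_of_perturbed_le ht heq hperturbed
  have hrestricted := hRKTsub A B C (hAmpleNef hA) hBnef hCnef
  have hT : 0 < ι (fun j : Fin n => if (j : ℕ) < k - 1 then B j
      else if (j : ℕ) < k then A else C (j - k)) := hAmplePos _ fun j => by
    split_ifs
    exacts [hB _ (by omega), hA, hC _ (by omega)]
  have hRT := mul_pos (hAmplePos _ fun _ => hA) hT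
  linarith [mul_lt_mul_of_pos_right (factorial_ratio_lt_factorial_ratio_pred hk1 hkn) hRT]

/-- **Strictness of the reverse Khovanskii–Teissier inequality for ample
classes (key step in Theorem 3.4).**  The `n`-dimensional projective variety
is modelled by its real Néron–Severi space `M` with the symmetric
`n`-multilinear intersection form `ι`, the nef cone `Nef`, and the ample cone
`Ample ⊆ Nef` with positive intersection numbers and the openness property
`hAmpleOpen`.  Assume the reverse Khovanskii–Teissier inequality holds for
all nef classes: on `X` itself (`hRKT`), and in its restricted form on the
(`n−1`)-dimensional very ample representative of `A` (`hRKTsub`, inequality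
(3.4) of the paper:
`(B₁⋯B_{k−1}·A^{n−k+1})·(A^k·C₁⋯C_{n−k}) ≥ ((k−1)!(n−k)!/(n−1)!)·(A^n)·(B₁⋯B_{k−1}·A·C₁⋯C_{n−k})`).
Then for ample `A, B₁, …, B_k, C₁, …, C_{n−k}` the inequality is strict. -/
theorem stmt8
    (n k : ℕ) (hk1 : 1 ≤ k) (hk2 : k ≤ n - 1)
    {M : Type*} [AddCommGroup M] [Module ℝ M]
    (ι : MultilinearMap ℝ (fun _ : Fin n => M) ℝ)
    (hsymm : ∀ (v : Fin n → M) (σ : Equiv.Perm (Fin n)), ι (v ∘ σ) = ι v)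
    (Nef Ample : Set M)
    (hnef : ∀ v : Fin n → M, (∀ j, v j ∈ Nef) → 0 ≤ ι v)
    (hAmpleNef : Ample ⊆ Nef)
    (hAmplePos : ∀ v : Fin n → M, (∀ j, v j ∈ Ample) → 0 < ι v)
    (hAmpleOpen : ∀ D E : M, D ∈ Ample → E ∈ Ample →
      ∃ t : ℝ, 0 < t ∧ D - t • E ∈ Ample)
    (hRKT : ∀ (A : M) (B C : ℕ → M), A ∈ Nef →
      (∀ i < k, B i ∈ Nef) → (∀ i < n - k, C i ∈ Nef) →
      ι (fun j => if (j : ℕ) < k then B (j : ℕ) else A) *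
          ι (fun j => if (j : ℕ) < k then A else C ((j : ℕ) - k)) ≥
        ((k.factorial : ℝ) * (n - k).factorial / n.factorial) *
          (ι (fun _ => A) *
            ι (fun j => if (j : ℕ) < k then B (j : ℕ) else C ((j : ℕ) - k))))
    (hRKTsub : ∀ (A : M) (B C : ℕ → M), A ∈ Nef →
      (∀ i < k, B i ∈ Nef) → (∀ i < n - k, C i ∈ Nef) →
      ι (fun j => if (j : ℕ) < k - 1 then B (j : ℕ) else A) *
          ι (fun j => if (j : ℕ) < k then A else C ((j : ℕ) - k)) ≥
        (((k - 1).factorial : ℝ) * (n - k).factorial / (n - 1).factorial) *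
          (ι (fun _ => A) *
            ι (fun j => if (j : ℕ) < k - 1 then B (j : ℕ)
                else if (j : ℕ) < k then A else C ((j : ℕ) - k))))
    (A : M) (B C : ℕ → M)
    (hA : A ∈ Ample) (hB : ∀ i < k, B i ∈ Ample) (hC : ∀ i < n - k, C i ∈ Ample) :
    ι (fun j => if (j : ℕ) < k then B (j : ℕ) else A) *
        ι (fun j => if (j : ℕ) < k then A else C ((j : ℕ) - k)) >
      ((k.factorial : ℝ) * (n - k).factorial / n.factorial) *
        (ι (fun _ => A) *
          ι (fun j => if (j : ℕ) < k then B (j : ℕ) else C ((j : ℕ) - k))) :=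
  stmt8_general n k hk1 hk2 ι Nef Ample hAmpleNef hAmplePos hAmpleOpen hRKT hRKTsub A B C hA hB hC
end
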